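/- arXiv:1809.00813 — 2 statements merged into one kernel-verified Lean document; each statement's English description precedes it below -/
import Mathlib

section
/- For every integer z, 64 divides P(-1+4z, -1+4z). (Equivalently, Q_N(z) := P(-1+4z,-1+4z)/64 is an integer for every integer z, even though the polynomial Q_N has two non-integer rational coefficients.) -/
def P (x y : ℤ) : ℤ :=
  y^12 + 6*y^11 + 21*y^10 + 56*y^9 + 126*y^8 + 252*y^7 + x^6 + 45*x*y^5 + 462*y^6
  + 12*x^5 + 6*x^4*y + 225*x*y^4 + 747*y^5 + 72*x^4 + 111*x^3*y + 240*x^2*y^2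
  + 675*x*y^3 + 1017*y^4 + 247*x^3 + 591*x^2*y + 1095*x*y^2 + 1057*y^3
  + 417*x^2 + 909*x*y + 723*y^2 + 231*x + 231*y

theorem stmt_2 : ∀ z : ℤ, (64 : ℤ) ∣ P (-1 + 4*z) (-1 + 4*z) := by
  intro z
  rcases Int.even_or_odd z with ⟨k, hk⟩ | ⟨k, hk⟩
  · refine ⟨1 - 15*k + 390*k^2 - 8096*k^3 + 41856*k^4 - 39936*k^5 + 532480*k^6
      - 2359296*k^7 + 18874368*k^8 - 92274688*k^9 + 352321536*k^10
      - 805306368*k^11 + 1073741824*k^12, ?_⟩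
    subst hk; unfold P; ring
  · refine ⟨96831 + 2302143*k + 25887318*k^2 + 180695392*k^3 + 866915712*k^4
      + 2999632896*k^5 + 7655268352*k^6 + 14493155328*k^7 + 20176699392*k^8
      + 20124270592*k^9 + 13639876608*k^10 + 5637144576*k^11 + 1073741824*k^12, ?_⟩
    subst hk; unfold P; ring
end

section
/- There exists an integer z such that 64 divides P(-1+4z, -1+4z) and P(-1+4z, -1+4z)/64 is even (i.e., 128 divides P(-1+4z, -1+4z)). (This is the paper's main counterexample claim: the matroid N with Tutte polynomial P refutes Las Vergnas's Conjecture 4.2, which asserted that T_M(−1+4z, −1+4z)/T_M(−1,−1) is an odd integer for every binary matroid M and every integer z.) -/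
theorem stmt_7 : ∃ z : ℤ, (64 : ℤ) ∣ P (-1 + 4*z) (-1 + 4*z) ∧
    (128 : ℤ) ∣ P (-1 + 4*z) (-1 + 4*z) := by
  refine ⟨-1, ⟨1285110, by norm_num [P]⟩, ⟨642555, by norm_num [P]⟩⟩
end
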